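/- Fix m > 0, indices μ, ν ∈ {0,1,2,3}, and f ∈ 𝒮(ℝ⁴; ℂ) with covariant Fourier transform f̂. Then the function ℝ³ × ℝ³ ∋ (p, k) ↦ f̂( (E_m(p) + E_m(k), p + k) ) · t_{μν}( (E_m(p), p), (−E_m(k), −k) ) belongs to 𝒮(ℝ⁶; ℂ). -/

import Mathlib

open MeasureTheory
open scoped ContDiff FourierTransform RealInnerProductSpace

noncomputable section

/-- `E_m(q) = √(|q|² + m²)` for `q ∈ ℝ³`. -/
def Em (m : ℝ) (q : Fin 3 → ℝ) : ℝ :=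
  Real.sqrt (q 0 ^ 2 + q 1 ^ 2 + q 2 ^ 2 + m ^ 2)

/-- The Minkowski metric matrix `η = diag(−1,1,1,1)`. -/
def etaMat (μ ν : Fin 4) : ℝ := if μ = ν then (if μ = 0 then -1 else 1) else 0

/-- Lowering of the index of a 4-vector: `v₀ = −v⁰`, `v_i = v^i`. -/
def lowerIdx (v : Fin 4 → ℝ) : Fin 4 → ℝ := fun a => if a = 0 then -v 0 else v a

/-- `η(p,k) = −p⁰k⁰ + p⃗·k⃗`. -/
def eta4 (p k : Fin 4 → ℝ) : ℝ := -(p 0 * k 0) + p 1 * k 1 + p 2 * k 2 + p 3 * k 3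

/-- `t_{μν}(p,k) = ½[k_μ p_ν + p_μ k_ν − η_{μν}(η(p,k) + m²)]`. -/
def tTensor (m : ℝ) (μ ν : Fin 4) (p k : Fin 4 → ℝ) : ℝ :=
  (1 / 2) * (lowerIdx k μ * lowerIdx p ν + lowerIdx p μ * lowerIdx k ν
    - etaMat μ ν * (eta4 p k + m ^ 2))

/-- The point of the future mass shell over `q ∈ ℝ³`: `(E_m(q), q)`. -/
def onShell (m : ℝ) (q : Fin 3 → ℝ) : Fin 4 → ℝ := ![Em m q, q 0, q 1, q 2]

/-- The covariant Fourier transform `f̂(q) = (2π)^{−2} ∫_{ℝ⁴} e^{−iη(q,x)} f(x) d⁴x`,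
where a point of `ℝ⁴` is written `(x⁰, x⃗) ∈ ℝ × ℝ³` and `η(q,x) = −q⁰x⁰ + q⃗·x⃗`. -/
def covFT (f : ℝ × (Fin 3 → ℝ) → ℂ) (q : ℝ × (Fin 3 → ℝ)) : ℂ :=
  ((((2 * Real.pi) ^ 2)⁻¹ : ℝ) : ℂ) *
    ∫ x : ℝ × (Fin 3 → ℝ),
      Complex.exp (-Complex.I *
        ((-(q.1 * x.1) + (q.2 0 * x.2 0 + q.2 1 * x.2 1 + q.2 2 * x.2 2) : ℝ) : ℂ)) * f x


namespace Stmt10Aux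

variable {E F G : Type*} [NormedAddCommGroup E] [NormedSpace ℝ E]
  [NormedAddCommGroup F] [NormedSpace ℝ F] [NormedAddCommGroup G] [NormedSpace ℝ G]

lemma htg_clm_comp {f : E → F} (hf : Function.HasTemperateGrowth f) (L : F →L[ℝ] G) :
    Function.HasTemperateGrowth fun x => L (f x) := by
  refine ⟨L.contDiff.comp hf.1, fun n => ?_⟩
  obtain ⟨k, C, hC⟩ := hf.2 n
  refine ⟨k, ‖L‖ * C, fun x => ?_⟩
  have h1 : iteratedFDeriv ℝ n (L ∘ f) x
      = L.compContinuousMultilinearMap (iteratedFDeriv ℝ n f x) :=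
    L.iteratedFDeriv_comp_left (x := x) hf.1.contDiffAt (by exact_mod_cast le_top)
  calc ‖iteratedFDeriv ℝ n (fun x => L (f x)) x‖
      = ‖L.compContinuousMultilinearMap (iteratedFDeriv ℝ n f x)‖ := by
        rw [← h1]; rfl
    _ ≤ ‖L‖ * ‖iteratedFDeriv ℝ n f x‖ := L.norm_compContinuousMultilinearMap_le _
    _ ≤ ‖L‖ * (C * (1 + ‖x‖) ^ k) := by
        gcongr
        exact hC x
    _ = ‖L‖ * C * (1 + ‖x‖) ^ k := by ring

lemma htg_comp_clm {f : F → G} (hf : Function.HasTemperateGrowth f) (L : E →L[ℝ] F) :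
    Function.HasTemperateGrowth fun x => f (L x) := by
  refine ⟨hf.1.comp L.contDiff, fun n => ?_⟩
  obtain ⟨k, C, hC0, hC⟩ := hf.norm_iteratedFDeriv_le_uniform n
  refine ⟨k, C * ‖L‖ ^ n * (1 + ‖L‖) ^ k, fun x => ?_⟩
  have h1 : iteratedFDeriv ℝ n (f ∘ L) x
      = (iteratedFDeriv ℝ n f (L x)).compContinuousLinearMap (fun _ => L) :=
    L.iteratedFDeriv_comp_right (hf.1.of_le (mod_cast le_top)) x le_rfl
  have h2 : ‖iteratedFDeriv ℝ n (fun x => f (L x)) x‖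
      ≤ ‖iteratedFDeriv ℝ n f (L x)‖ * ‖L‖ ^ n := by
    have := (iteratedFDeriv ℝ n f (L x)).norm_compContinuousLinearMap_le (fun _ : Fin n => L)
    rw [show (fun x => f (L x)) = f ∘ L from rfl, h1]
    simpa using this
  have h4 : (1 + ‖L x‖) ≤ (1 + ‖L‖) * (1 + ‖x‖) := by
    have h5 := L.le_opNorm x
    have h6 : (0:ℝ) ≤ ‖L‖ := norm_nonneg _
    have h7 : (0:ℝ) ≤ ‖x‖ := norm_nonneg _
    nlinarith
  calc ‖iteratedFDeriv ℝ n (fun x => f (L x)) x‖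
      ≤ ‖iteratedFDeriv ℝ n f (L x)‖ * ‖L‖ ^ n := h2
    _ ≤ (C * (1 + ‖L x‖) ^ k) * ‖L‖ ^ n := by
        gcongr
        exact hC n le_rfl (L x)
    _ ≤ (C * ((1 + ‖L‖) * (1 + ‖x‖)) ^ k) * ‖L‖ ^ n := by
        gcongr
    _ = C * ‖L‖ ^ n * (1 + ‖L‖) ^ k * (1 + ‖x‖) ^ k := by
        rw [mul_pow]; ring

lemma htg_add {f g : E → F} (hf : Function.HasTemperateGrowth f)
    (hg : Function.HasTemperateGrowth g) :
    Function.HasTemperateGrowth fun x => f x + g x := by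
  refine ⟨hf.1.add hg.1, fun n => ?_⟩
  obtain ⟨k1, C1, hC1, h1⟩ := hf.norm_iteratedFDeriv_le_uniform n
  obtain ⟨k2, C2, hC2, h2⟩ := hg.norm_iteratedFDeriv_le_uniform n
  refine ⟨k1 + k2, C1 + C2, fun x => ?_⟩
  have hadd : iteratedFDeriv ℝ n (fun x => f x + g x) x
      = iteratedFDeriv ℝ n f x + iteratedFDeriv ℝ n g x := by
    have := iteratedFDeriv_add_apply (𝕜 := ℝ) (f := f) (g := g) (i := n) (x := x)
      (hf.1.contDiffAt.of_le (by exact_mod_cast le_top)) (hg.1.contDiffAt.of_le (by exact_mod_cast le_top))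
    exact this
  have e1 : (1:ℝ) ≤ 1 + ‖x‖ := by have := norm_nonneg x; linarith
  rw [hadd]
  calc ‖iteratedFDeriv ℝ n f x + iteratedFDeriv ℝ n g x‖
      ≤ ‖iteratedFDeriv ℝ n f x‖ + ‖iteratedFDeriv ℝ n g x‖ := norm_add_le _ _
    _ ≤ C1 * (1 + ‖x‖) ^ k1 + C2 * (1 + ‖x‖) ^ k2 :=
        add_le_add (h1 n le_rfl x) (h2 n le_rfl x)
    _ ≤ C1 * (1 + ‖x‖) ^ (k1 + k2) + C2 * (1 + ‖x‖) ^ (k1 + k2) := by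
        gcongr <;> simp
    _ = (C1 + C2) * (1 + ‖x‖) ^ (k1 + k2) := by ring

lemma htg_neg {f : E → F} (hf : Function.HasTemperateGrowth f) :
    Function.HasTemperateGrowth fun x => -(f x) := by
  have := htg_clm_comp hf (-(ContinuousLinearMap.id ℝ F))
  simpa using this

lemma htg_sub {f g : E → F} (hf : Function.HasTemperateGrowth f)
    (hg : Function.HasTemperateGrowth g) :
    Function.HasTemperateGrowth fun x => f x - g x := by
  have := htg_add hf (htg_neg hg)
  simpa [sub_eq_add_neg] using this

lemma htg_mul {f g : E → ℝ} (hf : Function.HasTemperateGrowth f)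
    (hg : Function.HasTemperateGrowth g) :
    Function.HasTemperateGrowth fun x => f x * g x := by
  refine ⟨hf.1.mul hg.1, fun n => ?_⟩
  obtain ⟨k1, C1, hC1, h1⟩ := hf.norm_iteratedFDeriv_le_uniform n
  obtain ⟨k2, C2, hC2, h2⟩ := hg.norm_iteratedFDeriv_le_uniform n
  refine ⟨k1 + k2, 2 ^ n * (C1 * C2), fun x => ?_⟩
  have key := norm_iteratedFDeriv_mul_le (𝕜 := ℝ) hf.1 hg.1 x (n := n) (mod_cast le_top)
  refine key.trans ?_
  have hterm : ∀ i ∈ Finset.range (n + 1),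
      (n.choose i : ℝ) * ‖iteratedFDeriv ℝ i f x‖ * ‖iteratedFDeriv ℝ (n - i) g x‖
        ≤ (n.choose i : ℝ) * (C1 * C2 * (1 + ‖x‖) ^ (k1 + k2)) := by
    intro i hi
    have hi' : i ≤ n := Nat.lt_succ_iff.mp (Finset.mem_range.mp hi)
    have a1 := h1 i hi' x
    have a2 := h2 (n - i) (Nat.sub_le n i) x
    have hmm : ‖iteratedFDeriv ℝ i f x‖ * ‖iteratedFDeriv ℝ (n - i) g x‖
        ≤ (C1 * (1 + ‖x‖) ^ k1) * (C2 * (1 + ‖x‖) ^ k2) :=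
      mul_le_mul a1 a2 (norm_nonneg _) (by positivity)
    calc (n.choose i : ℝ) * ‖iteratedFDeriv ℝ i f x‖ * ‖iteratedFDeriv ℝ (n - i) g x‖
        = (n.choose i : ℝ) * (‖iteratedFDeriv ℝ i f x‖ * ‖iteratedFDeriv ℝ (n - i) g x‖) := by
          ring
      _ ≤ (n.choose i : ℝ) * ((C1 * (1 + ‖x‖) ^ k1) * (C2 * (1 + ‖x‖) ^ k2)) := by
          gcongr
      _ = (n.choose i : ℝ) * (C1 * C2 * (1 + ‖x‖) ^ (k1 + k2)) := by
          rw [pow_add]; ring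
  calc ∑ i ∈ Finset.range (n + 1),
        (n.choose i : ℝ) * ‖iteratedFDeriv ℝ i f x‖ * ‖iteratedFDeriv ℝ (n - i) g x‖
      ≤ ∑ i ∈ Finset.range (n + 1), (n.choose i : ℝ) * (C1 * C2 * (1 + ‖x‖) ^ (k1 + k2)) :=
        Finset.sum_le_sum hterm
    _ = (∑ i ∈ Finset.range (n + 1), (n.choose i : ℝ)) * (C1 * C2 * (1 + ‖x‖) ^ (k1 + k2)) := by
        rw [Finset.sum_mul]
    _ = 2 ^ n * (C1 * C2) * (1 + ‖x‖) ^ (k1 + k2) := by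
        have : (∑ i ∈ Finset.range (n + 1), (n.choose i : ℝ)) = (2 : ℝ) ^ n := by
          exact_mod_cast Nat.sum_range_choose n
        rw [this]; ring

lemma htg_prod_mk {f : E → F} {g : E → G} (hf : Function.HasTemperateGrowth f)
    (hg : Function.HasTemperateGrowth g) :
    Function.HasTemperateGrowth fun x => (f x, g x) := by
  have := htg_add (htg_clm_comp hf (ContinuousLinearMap.inl ℝ F G))
    (htg_clm_comp hg (ContinuousLinearMap.inr ℝ F G))
  simpa using this


/-- coefficients of iterated derivatives of sqrt -/
def sqrtC : ℕ → ℝ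
  | 0 => 1
  | n + 1 => sqrtC n * ((1 : ℝ) / 2 - n)

lemma iteratedDeriv_sqrt (n : ℕ) : ∀ y : ℝ, 0 < y →
    iteratedDeriv n Real.sqrt y = sqrtC n * y ^ ((1 : ℝ) / 2 - n) := by
  induction n with
  | zero =>
    intro y hy
    simp [sqrtC, Real.sqrt_eq_rpow]
  | succ n ih =>
    intro y hy
    rw [iteratedDeriv_succ]
    have h1 : (fun s => iteratedDeriv n Real.sqrt s)
        =ᶠ[nhds y] fun s => sqrtC n * s ^ ((1 : ℝ) / 2 - n) := by
      filter_upwards [IsOpen.mem_nhds isOpen_Ioi hy] with s hs using ih s hs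
    rw [h1.deriv_eq]
    have h2 : HasDerivAt (fun s : ℝ => s ^ ((1 : ℝ) / 2 - n))
        (((1 : ℝ) / 2 - n) * y ^ ((1 : ℝ) / 2 - n - 1)) y :=
      Real.hasDerivAt_rpow_const (Or.inl hy.ne')
    rw [(h2.const_mul (sqrtC n)).deriv]
    have h3 : (1 : ℝ) / 2 - n - 1 = (1 : ℝ) / 2 - (n + 1 : ℕ) := by push_cast; ring
    rw [h3, sqrtC]
    ring

lemma contDiffOn_sqrt {a : ℝ} (ha : 0 < a) :
    ContDiffOn ℝ ∞ Real.sqrt (Set.Ioi a) := fun y hy =>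
  (Real.contDiffAt_sqrt (ne_of_gt (ha.trans hy))).contDiffWithinAt

lemma htg_Em (m : ℝ) (hm : 0 < m) :
    Function.HasTemperateGrowth fun q : Fin 3 → ℝ =>
      Real.sqrt (q 0 ^ 2 + q 1 ^ 2 + q 2 ^ 2 + m ^ 2) := by
  set u : (Fin 3 → ℝ) → ℝ := fun q => q 0 ^ 2 + q 1 ^ 2 + q 2 ^ 2 + m ^ 2 with hu
  have proj : ∀ i : Fin 3, Function.HasTemperateGrowth fun q : Fin 3 → ℝ => q i := fun i =>
    (ContinuousLinearMap.proj (R := ℝ) (φ := fun _ : Fin 3 => ℝ) i).hasTemperateGrowth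
  have htu : Function.HasTemperateGrowth u := by
    have h0 : Function.HasTemperateGrowth fun q : Fin 3 → ℝ => q 0 * q 0 := htg_mul (proj 0) (proj 0)
    have h1 : Function.HasTemperateGrowth fun q : Fin 3 → ℝ => q 1 * q 1 := htg_mul (proj 1) (proj 1)
    have h2 : Function.HasTemperateGrowth fun q : Fin 3 → ℝ => q 2 * q 2 := htg_mul (proj 2) (proj 2)
    have hc : Function.HasTemperateGrowth fun _ : Fin 3 → ℝ => m ^ 2 := .const _
    have := htg_add (htg_add (htg_add h0 h1) h2) hc
    simpa [hu, pow_two] using this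
  have hua : ∀ q, m ^ 2 ≤ u q := by
    intro q
    have := sq_nonneg (q 0); have := sq_nonneg (q 1); have := sq_nonneg (q 2)
    simp only [hu]; nlinarith
  have hupos : ∀ q, 0 < u q := fun q => lt_of_lt_of_le (by positivity) (hua q)
  set a : ℝ := m ^ 2 / 2 with hadef
  have ha : 0 < a := by positivity
  have humem : ∀ q, u q ∈ Set.Ioi a := fun q => lt_of_lt_of_le (by nlinarith) (hua q)
  have hsmooth : ContDiff ℝ ∞ fun q => Real.sqrt (u q) := by
    rw [contDiff_iff_contDiffAt]
    intro q
    exact (Real.contDiffAt_sqrt (ne_of_gt (hupos q))).comp q htu.1.contDiffAt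
  refine ⟨hsmooth, fun n => ?_⟩
  obtain ⟨l, C0, hC00, hC0⟩ := htu.norm_iteratedFDeriv_le_uniform n
  -- constant for sqrt derivatives of order ≥ 1 (and 0 handled via sqrt(u))
  set S : ℝ := ∑ i ∈ Finset.range (n + 1), |sqrtC i| * a ^ ((1 : ℝ) / 2 - i) with hS
  have hSnn : 0 ≤ S := Finset.sum_nonneg fun i _ => by positivity
  refine ⟨2 + l * n, ((Nat.factorial n : ℝ) * (1 + m ^ 2 + S + 3)) * (C0 + 1) ^ n, fun q => ?_⟩
  -- apply Faa di Bruno within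
  have hkey := norm_iteratedFDerivWithin_comp_le (𝕜 := ℝ) (g := Real.sqrt) (f := u)
    (n := n) (s := (Set.univ : Set (Fin 3 → ℝ))) (t := Set.Ioi a)
    (contDiffOn_sqrt ha) htu.1.contDiffOn (mod_cast le_top) (isOpen_Ioi.uniqueDiffOn)
    uniqueDiffOn_univ (fun x _ => humem x) (Set.mem_univ q)
    (C := Real.sqrt (u q) + S) (D := (C0 + 1) * (1 + ‖q‖) ^ l) ?_ ?_
  · rw [iteratedFDerivWithin_univ] at hkey
    have hb1 : Real.sqrt (u q) + S ≤ (1 + m ^ 2 + S + 3) * (1 + ‖q‖) ^ 2 := by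
      have h2 : Real.sqrt (u q) ≤ 1 + u q := by
        have hs : Real.sqrt (u q) ^ 2 = u q := Real.sq_sqrt (le_of_lt (hupos q))
        nlinarith [Real.sqrt_nonneg (u q)]
      have h3 : u q ≤ 3 * ‖q‖ ^ 2 + m ^ 2 := by
        have a0 : |q 0| ≤ ‖q‖ := by
          have := norm_le_pi_norm q 0; simpa [Real.norm_eq_abs] using this
        have a1 : |q 1| ≤ ‖q‖ := by
          have := norm_le_pi_norm q 1; simpa [Real.norm_eq_abs] using this
        have a2 : |q 2| ≤ ‖q‖ := by
          have := norm_le_pi_norm q 2; simpa [Real.norm_eq_abs] using this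
        have b0 : q 0 ^ 2 ≤ ‖q‖ ^ 2 := by nlinarith [abs_nonneg (q 0), sq_abs (q 0)]
        have b1 : q 1 ^ 2 ≤ ‖q‖ ^ 2 := by nlinarith [abs_nonneg (q 1), sq_abs (q 1)]
        have b2 : q 2 ^ 2 ≤ ‖q‖ ^ 2 := by nlinarith [abs_nonneg (q 2), sq_abs (q 2)]
        simp only [hu]; nlinarith
      have h5 : (1:ℝ) + ‖q‖ ≥ 1 := by have := norm_nonneg q; linarith
      have h6 : ‖q‖ ^ 2 ≤ (1 + ‖q‖) ^ 2 := by nlinarith [norm_nonneg q]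
      have h7 : (1:ℝ) ≤ (1 + ‖q‖) ^ 2 := by nlinarith [norm_nonneg q]
      nlinarith [norm_nonneg q]
    have hb2 : ((C0 + 1) * (1 + ‖q‖) ^ l) ^ n = (C0 + 1) ^ n * (1 + ‖q‖) ^ (l * n) := by
      rw [mul_pow, ← pow_mul]
    show ‖iteratedFDeriv ℝ n (Real.sqrt ∘ u) q‖ ≤ _
    calc ‖iteratedFDeriv ℝ n (Real.sqrt ∘ u) q‖
        ≤ (Nat.factorial n : ℝ) * (Real.sqrt (u q) + S) * ((C0 + 1) * (1 + ‖q‖) ^ l) ^ n := hkey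
      _ ≤ (Nat.factorial n : ℝ) * ((1 + m ^ 2 + S + 3) * (1 + ‖q‖) ^ 2) * ((C0 + 1) ^ n * (1 + ‖q‖) ^ (l * n)) := by
          rw [hb2]
          gcongr
      _ = ((Nat.factorial n : ℝ) * (1 + m ^ 2 + S + 3)) * (C0 + 1) ^ n * (1 + ‖q‖) ^ (2 + l * n) := by
          rw [pow_add]; ring
  · -- bound on sqrt derivatives within Ioi a at u q
    intro i hi
    rw [iteratedFDerivWithin_of_isOpen i isOpen_Ioi (humem q),
      norm_iteratedFDeriv_eq_norm_iteratedDeriv, Real.norm_eq_abs,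
      iteratedDeriv_sqrt i (u q) (hupos q), abs_mul]
    rcases Nat.eq_zero_or_pos i with h0 | h0
    · subst h0
      have habs : |(u q) ^ ((1:ℝ)/2 - ((0:ℕ):ℝ))| = Real.sqrt (u q) := by
        rw [abs_of_nonneg (Real.rpow_nonneg (le_of_lt (hupos q)) _), Real.sqrt_eq_rpow]
        norm_num
      rw [habs]
      simp only [sqrtC, abs_one, one_mul]
      linarith
    · have he : (1:ℝ)/2 - (i:ℝ) ≤ 0 := by
        have : (1:ℝ) ≤ (i:ℝ) := by exact_mod_cast h0
        linarith
      have hle : (u q) ^ ((1:ℝ)/2 - (i:ℝ)) ≤ a ^ ((1:ℝ)/2 - (i:ℝ)) :=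
        Real.rpow_le_rpow_of_nonpos ha (le_of_lt (humem q)) he
      have habs : |(u q) ^ ((1:ℝ)/2 - ((i:ℕ):ℝ))| = (u q) ^ ((1:ℝ)/2 - (i:ℝ)) :=
        abs_of_nonneg (Real.rpow_nonneg (le_of_lt (hupos q)) _)
      rw [habs]
      have hms : |sqrtC i| * (u q) ^ ((1:ℝ)/2 - (i:ℝ)) ≤ |sqrtC i| * a ^ ((1:ℝ)/2 - (i:ℝ)) := by
        gcongr
      have hsum : |sqrtC i| * a ^ ((1:ℝ)/2 - (i:ℝ)) ≤ S :=
        Finset.single_le_sum (f := fun j => |sqrtC j| * a ^ ((1:ℝ)/2 - (j:ℝ)))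
          (fun j _ => by positivity) (Finset.mem_range.mpr (Nat.lt_succ_of_le hi))
      refine le_trans hms (le_trans hsum (by linarith [Real.sqrt_nonneg (u q)]))
  · -- bounds on derivatives of u
    intro i h1i hin
    rw [iteratedFDerivWithin_univ]
    have hD1 : (1:ℝ) ≤ (C0 + 1) * (1 + ‖q‖) ^ l := by
      have hp : (1:ℝ) ≤ (1 + ‖q‖) ^ l := one_le_pow₀ (by linarith [norm_nonneg q])
      nlinarith
    calc ‖iteratedFDeriv ℝ i u q‖ ≤ C0 * (1 + ‖q‖) ^ l := hC0 i hin q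
      _ ≤ (C0 + 1) * (1 + ‖q‖) ^ l := by gcongr <;> linarith
      _ ≤ ((C0 + 1) * (1 + ‖q‖) ^ l) ^ i := le_self_pow₀ hD1 (by omega)


def toE : EuclideanSpace ℝ (Fin 4) →L[ℝ] ℝ × (Fin 3 → ℝ) :=
  (ContinuousLinearMap.prod (ContinuousLinearMap.proj (R := ℝ) (φ := fun _ : Fin 4 => ℝ) 0)
    (ContinuousLinearMap.pi fun j : Fin 3 =>
      ContinuousLinearMap.proj (R := ℝ) (φ := fun _ : Fin 4 => ℝ) j.succ)).comp
    (PiLp.continuousLinearEquiv 2 ℝ (fun _ : Fin 4 => ℝ)).toContinuousLinearMap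

lemma toE_apply (v : EuclideanSpace ℝ (Fin 4)) : toE v = (v 0, fun j => v j.succ) := rfl

def toVc : Fin 4 → ((ℝ × (Fin 3 → ℝ)) →L[ℝ] ℝ) :=
  ![-(ContinuousLinearMap.fst ℝ ℝ (Fin 3 → ℝ)),
    (ContinuousLinearMap.proj (R := ℝ) (φ := fun _ : Fin 3 => ℝ) 0).comp
      (ContinuousLinearMap.snd ℝ ℝ (Fin 3 → ℝ)),
    (ContinuousLinearMap.proj (R := ℝ) (φ := fun _ : Fin 3 => ℝ) 1).comp
      (ContinuousLinearMap.snd ℝ ℝ (Fin 3 → ℝ)),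
    (ContinuousLinearMap.proj (R := ℝ) (φ := fun _ : Fin 3 => ℝ) 2).comp
      (ContinuousLinearMap.snd ℝ ℝ (Fin 3 → ℝ))]

def toV : (ℝ × (Fin 3 → ℝ)) →L[ℝ] EuclideanSpace ℝ (Fin 4) :=
  ((PiLp.continuousLinearEquiv 2 ℝ (fun _ : Fin 4 => ℝ)).symm.toContinuousLinearMap).comp
    (ContinuousLinearMap.pi fun i => toVc i)

lemma toV_apply (q : ℝ × (Fin 3 → ℝ)) (i : Fin 4) : toV q i = toVc i q := rfl

def wMap : (ℝ × (Fin 3 → ℝ)) →L[ℝ] EuclideanSpace ℝ (Fin 4) := ((2 * Real.pi)⁻¹) • toV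

lemma wMap_apply (q : ℝ × (Fin 3 → ℝ)) (i : Fin 4) :
    wMap q i = (2 * Real.pi)⁻¹ * toVc i q := rfl

lemma coord_le_norm (x : EuclideanSpace ℝ (Fin 4)) (i : Fin 4) : |x i| ≤ ‖x‖ := by
  rw [EuclideanSpace.norm_eq, ← Real.sqrt_sq_eq_abs]
  apply Real.sqrt_le_sqrt
  calc x i ^ 2 = ‖x i‖ ^ 2 := by rw [Real.norm_eq_abs, sq_abs]
    _ ≤ ∑ j, ‖x j‖ ^ 2 :=
        Finset.single_le_sum (f := fun j => ‖x j‖ ^ 2) (fun j _ => sq_nonneg _) (Finset.mem_univ i)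

lemma inner_wMap (v : EuclideanSpace ℝ (Fin 4)) (q : ℝ × (Fin 3 → ℝ)) :
    ⟪v, wMap q⟫ = (2 * Real.pi)⁻¹ *
      (-(q.1 * v 0) + (q.2 0 * v 1 + q.2 1 * v 2 + q.2 2 * v 3)) := by
  have h : ∀ i, wMap q i = (2 * Real.pi)⁻¹ * toVc i q := fun i => rfl
  rw [PiLp.inner_apply]
  simp only [RCLike.inner_apply, starRingEnd_apply, star_trivial]
  rw [Fin.sum_univ_four]
  simp only [h, toVc]
  simp only [Matrix.cons_val_zero, Matrix.cons_val_one, Matrix.head_cons,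
    Matrix.cons_val_two, Matrix.tail_cons, Matrix.cons_val_three]
  simp only [ContinuousLinearMap.neg_apply, ContinuousLinearMap.coe_fst',
    ContinuousLinearMap.coe_comp', Function.comp_apply,
    ContinuousLinearMap.coe_snd', ContinuousLinearMap.proj_apply]
  ring

/-- upper bound for compCLM along toE -/
lemma toE_upper : ∃ (k : ℕ) (C : ℝ), ∀ v : EuclideanSpace ℝ (Fin 4),
    ‖v‖ ≤ C * (1 + ‖toE v‖) ^ k := by
  refine ⟨1, 2, fun v => ?_⟩
  have hcoord : ∀ i : Fin 4, ‖v i‖ ≤ ‖toE v‖ := by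
    intro i
    induction i using Fin.cases with
    | zero =>
      calc ‖v 0‖ = ‖(toE v).1‖ := rfl
        _ ≤ ‖toE v‖ := norm_fst_le _
    | succ j =>
      calc ‖v j.succ‖ = ‖(toE v).2 j‖ := rfl
        _ ≤ ‖(toE v).2‖ := norm_le_pi_norm _ j
        _ ≤ ‖toE v‖ := norm_snd_le _
  have h1 : ‖v‖ ≤ 2 * ‖toE v‖ := by
    rw [EuclideanSpace.norm_eq]
    have h2 : ∑ j, ‖v j‖ ^ 2 ≤ 4 * ‖toE v‖ ^ 2 := by
      rw [Fin.sum_univ_four]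
      have h3 : ∀ i : Fin 4, ‖v i‖ ^ 2 ≤ ‖toE v‖ ^ 2 := fun i => by
        have := hcoord i
        have := norm_nonneg (v i)
        nlinarith
      nlinarith [h3 0, h3 1, h3 2, h3 3]
    calc Real.sqrt (∑ j, ‖v j‖ ^ 2) ≤ Real.sqrt (4 * ‖toE v‖ ^ 2) := Real.sqrt_le_sqrt h2
      _ = 2 * ‖toE v‖ := by
          rw [show (4 : ℝ) * ‖toE v‖ ^ 2 = (2 * ‖toE v‖) ^ 2 by ring]
          exact Real.sqrt_sq (by positivity)
  have := norm_nonneg (toE v)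
  calc ‖v‖ ≤ 2 * ‖toE v‖ := h1
    _ ≤ 2 * (1 + ‖toE v‖) ^ 1 := by nlinarith

lemma wMap_upper : ∃ (k : ℕ) (C : ℝ), ∀ q : ℝ × (Fin 3 → ℝ),
    ‖q‖ ≤ C * (1 + ‖wMap q‖) ^ k := by
  refine ⟨1, 2 * Real.pi, fun q => ?_⟩
  have hpi : (0:ℝ) < 2 * Real.pi := by positivity
  have hc : ∀ i : Fin 4, |toVc i q| ≤ (2 * Real.pi) * ‖wMap q‖ := by
    intro i
    have h1 : |wMap q i| ≤ ‖wMap q‖ := coord_le_norm _ i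
    rw [wMap_apply, abs_mul, abs_of_nonneg (le_of_lt (inv_pos.mpr hpi))] at h1
    calc |toVc i q| = (2 * Real.pi) * ((2 * Real.pi)⁻¹ * |toVc i q|) := by
          field_simp
      _ ≤ (2 * Real.pi) * ‖wMap q‖ := by
          exact mul_le_mul_of_nonneg_left h1 (le_of_lt hpi)
  have h1 : ‖q.1‖ ≤ (2 * Real.pi) * ‖wMap q‖ := by
    have := hc 0
    simp only [toVc, Matrix.cons_val_zero, ContinuousLinearMap.neg_apply,
      ContinuousLinearMap.coe_fst'] at this
    simpa [Real.norm_eq_abs] using this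
  have h2 : ‖q.2‖ ≤ (2 * Real.pi) * ‖wMap q‖ := by
    have hnn : (0:ℝ) ≤ (2 * Real.pi) * ‖wMap q‖ := by positivity
    rw [pi_norm_le_iff_of_nonneg hnn]
    intro j
    fin_cases j
    · have := hc 1
      simpa [toVc, Real.norm_eq_abs] using this
    · have := hc 2
      simpa [toVc, Real.norm_eq_abs] using this
    · have := hc 3
      simpa [toVc, Real.norm_eq_abs] using this
  have hq : ‖q‖ ≤ (2 * Real.pi) * ‖wMap q‖ := by
    rw [Prod.norm_def]
    exact max_le h1 h2
  have hW := norm_nonneg (wMap q)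
  calc ‖q‖ ≤ (2 * Real.pi) * ‖wMap q‖ := hq
    _ ≤ (2 * Real.pi) * (1 + ‖wMap q‖) ^ 1 := by nlinarith

def meEq : EuclideanSpace ℝ (Fin 4) ≃ᵐ (ℝ × (Fin 3 → ℝ)) :=
  (MeasurableEquiv.toLp 2 (Fin 4 → ℝ)).symm.trans
    (MeasurableEquiv.piFinSuccAbove (fun _ : Fin 4 => ℝ) 0)

lemma meEq_apply (v : EuclideanSpace ℝ (Fin 4)) : meEq v = toE v := rfl

lemma meEq_mp : MeasurePreserving (⇑meEq) volume volume := by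
  have h := (volume_preserving_piFinSuccAbove (fun _ : Fin 4 => ℝ) 0).comp
    (EuclideanSpace.volume_preserving_symm_measurableEquiv_toLp (Fin 4))
  exact h


def inner4 (f : SchwartzMap (ℝ × (Fin 3 → ℝ)) ℂ) : SchwartzMap (EuclideanSpace ℝ (Fin 4)) ℂ :=
  SchwartzMap.compCLM ℝ toE.hasTemperateGrowth toE_upper f

def Fhat (f : SchwartzMap (ℝ × (Fin 3 → ℝ)) ℂ) : SchwartzMap (ℝ × (Fin 3 → ℝ)) ℂ :=
  (((2 * Real.pi) ^ 2)⁻¹ : ℝ) •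
    (SchwartzMap.compCLM ℝ wMap.hasTemperateGrowth wMap_upper
      (SchwartzMap.fourierTransformCLM ℝ (inner4 f)))

lemma Fhat_apply (f : SchwartzMap (ℝ × (Fin 3 → ℝ)) ℂ) (q : ℝ × (Fin 3 → ℝ)) :
    Fhat f q = covFT (⇑f) q := by
  have hL : Fhat f q = (((2 * Real.pi) ^ 2)⁻¹ : ℝ) • (𝓕 (⇑(inner4 f)) (wMap q)) := rfl
  rw [hL, Real.fourier_eq', covFT]
  have hint : (∫ x : ℝ × (Fin 3 → ℝ),
      Complex.exp (-Complex.I *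
        ((-(q.1 * x.1) + (q.2 0 * x.2 0 + q.2 1 * x.2 1 + q.2 2 * x.2 2) : ℝ) : ℂ)) * f x)
      = ∫ v : EuclideanSpace ℝ (Fin 4),
          Complex.exp (((-2 * Real.pi * ⟪v, wMap q⟫ : ℝ) : ℂ) * Complex.I) • (inner4 f) v := by
    rw [← meEq_mp.integral_comp meEq.measurableEmbedding]
    congr 1
    funext v
    have hv : meEq v = toE v := meEq_apply v
    rw [hv, smul_eq_mul]
    have hfe : (inner4 f) v = f (toE v) := rfl
    rw [hfe]
    congr 1
    rw [inner_wMap, toE_apply]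
    dsimp only
    have hpi : (2 * Real.pi) ≠ 0 := by positivity
    have hexp : (-2 * Real.pi * ((2 * Real.pi)⁻¹ *
        (-(q.1 * v 0) + (q.2 0 * v 1 + q.2 1 * v 2 + q.2 2 * v 3))))
        = -(-(q.1 * v 0) + (q.2 0 * v 1 + q.2 1 * v 2 + q.2 2 * v 3)) := by
      rw [← mul_assoc, show (-2 * Real.pi) * (2 * Real.pi)⁻¹ = -1 by field_simp]
      ring
    rw [hexp]
    have v1 : v (Fin.succ 0) = v 1 := rfl
    have v2 : v (Fin.succ 1) = v 2 := rfl
    have v3 : v (Fin.succ 2) = v 3 := rfl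
    rw [v1, v2, v3]
    push_cast
    ring_nf
  rw [hint, Complex.real_smul]

end Stmt10Aux

open Stmt10Aux in
/-- For `f ∈ 𝒮(ℝ⁴)`, the function
`(p, k) ↦ f̂(E_m(p) + E_m(k), p + k) · t_{μν}((E_m(p), p), (−E_m(k), −k))`
is Schwartz on `ℝ⁶`. -/
theorem stmt_10 (m : ℝ) (hm : 0 < m) (μ ν : Fin 4)
    (f : SchwartzMap (ℝ × (Fin 3 → ℝ)) ℂ) :
    ∃ Φ : SchwartzMap ((Fin 3 → ℝ) × (Fin 3 → ℝ)) ℂ,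
      ∀ p k : Fin 3 → ℝ,
        Φ (p, k) =
          covFT (⇑f) (Em m p + Em m k, p + k) *
            ((tTensor m μ ν (onShell m p) (-(onShell m k)) : ℝ) : ℂ) := by
  classical
  have hEm : Function.HasTemperateGrowth (Em m) := htg_Em m hm
  set D := ((Fin 3 → ℝ) × (Fin 3 → ℝ))
  have hEm1 : Function.HasTemperateGrowth (fun pk : D => Em m pk.1) :=
    htg_comp_clm hEm (ContinuousLinearMap.fst ℝ (Fin 3 → ℝ) (Fin 3 → ℝ))
  have hEm2 : Function.HasTemperateGrowth (fun pk : D => Em m pk.2) :=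
    htg_comp_clm hEm (ContinuousLinearMap.snd ℝ (Fin 3 → ℝ) (Fin 3 → ℝ))
  have hc1 : ∀ i : Fin 3, Function.HasTemperateGrowth (fun pk : D => pk.1 i) := by
    intro i
    have := ((ContinuousLinearMap.proj (R := ℝ) (φ := fun _ : Fin 3 => ℝ) i).comp
      (ContinuousLinearMap.fst ℝ (Fin 3 → ℝ) (Fin 3 → ℝ))).hasTemperateGrowth
    exact this
  have hc2 : ∀ i : Fin 3, Function.HasTemperateGrowth (fun pk : D => pk.2 i) := by
    intro i
    have := ((ContinuousLinearMap.proj (R := ℝ) (φ := fun _ : Fin 3 => ℝ) i).comp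
      (ContinuousLinearMap.snd ℝ (Fin 3 → ℝ) (Fin 3 → ℝ))).hasTemperateGrowth
    exact this
  -- temperate growth of lowered on-shell components
  have hA : ∀ a : Fin 4, Function.HasTemperateGrowth
      (fun pk : D => lowerIdx (onShell m pk.1) a) := by
    intro a
    fin_cases a
    · show Function.HasTemperateGrowth fun pk : D => lowerIdx (onShell m pk.1) 0
      have heq : (fun pk : D => lowerIdx (onShell m pk.1) 0) = fun pk : D => -(Em m pk.1) := by
        funext pk; simp [lowerIdx, onShell]
      rw [heq]; exact htg_neg hEm1
    · show Function.HasTemperateGrowth fun pk : D => lowerIdx (onShell m pk.1) 1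
      have heq : (fun pk : D => lowerIdx (onShell m pk.1) 1) = fun pk : D => pk.1 0 := by
        funext pk; simp [lowerIdx, onShell]
      rw [heq]; exact hc1 0
    · show Function.HasTemperateGrowth fun pk : D => lowerIdx (onShell m pk.1) 2
      have heq : (fun pk : D => lowerIdx (onShell m pk.1) 2) = fun pk : D => pk.1 1 := by
        funext pk; simp [lowerIdx, onShell]
      rw [heq]; exact hc1 1
    · show Function.HasTemperateGrowth fun pk : D => lowerIdx (onShell m pk.1) 3
      have heq : (fun pk : D => lowerIdx (onShell m pk.1) 3) = fun pk : D => pk.1 2 := by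
        funext pk; simp [lowerIdx, onShell]
      rw [heq]; exact hc1 2
  have hB : ∀ a : Fin 4, Function.HasTemperateGrowth
      (fun pk : D => lowerIdx (-(onShell m pk.2)) a) := by
    intro a
    fin_cases a
    · show Function.HasTemperateGrowth fun pk : D => lowerIdx (-(onShell m pk.2)) 0
      have heq : (fun pk : D => lowerIdx (-(onShell m pk.2)) 0) = fun pk : D => Em m pk.2 := by
        funext pk; simp [lowerIdx, onShell]
      rw [heq]; exact hEm2
    · show Function.HasTemperateGrowth fun pk : D => lowerIdx (-(onShell m pk.2)) 1
      have heq : (fun pk : D => lowerIdx (-(onShell m pk.2)) 1) = fun pk : D => -(pk.2 0) := by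
        funext pk; simp [lowerIdx, onShell]
      rw [heq]; exact htg_neg (hc2 0)
    · show Function.HasTemperateGrowth fun pk : D => lowerIdx (-(onShell m pk.2)) 2
      have heq : (fun pk : D => lowerIdx (-(onShell m pk.2)) 2) = fun pk : D => -(pk.2 1) := by
        funext pk; simp [lowerIdx, onShell]
      rw [heq]; exact htg_neg (hc2 1)
    · show Function.HasTemperateGrowth fun pk : D => lowerIdx (-(onShell m pk.2)) 3
      have heq : (fun pk : D => lowerIdx (-(onShell m pk.2)) 3) = fun pk : D => -(pk.2 2) := by
        funext pk; simp [lowerIdx, onShell]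
      rw [heq]; exact htg_neg (hc2 2)
  have hE4 : Function.HasTemperateGrowth
      (fun pk : D => eta4 (onShell m pk.1) (-(onShell m pk.2))) := by
    have heq : (fun pk : D => eta4 (onShell m pk.1) (-(onShell m pk.2)))
        = fun pk : D => -(Em m pk.1 * -(Em m pk.2)) + pk.1 0 * -(pk.2 0)
            + pk.1 1 * -(pk.2 1) + pk.1 2 * -(pk.2 2) := by
      funext pk; simp [eta4, onShell]
    rw [heq]
    exact htg_add (htg_add (htg_add
      (htg_neg (htg_mul hEm1 (htg_neg hEm2)))
      (htg_mul (hc1 0) (htg_neg (hc2 0))))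
      (htg_mul (hc1 1) (htg_neg (hc2 1))))
      (htg_mul (hc1 2) (htg_neg (hc2 2)))
  have hT : Function.HasTemperateGrowth
      (fun pk : D => tTensor m μ ν (onShell m pk.1) (-(onShell m pk.2))) := by
    have heq : (fun pk : D => tTensor m μ ν (onShell m pk.1) (-(onShell m pk.2)))
        = fun pk : D => (1 / 2 : ℝ) *
            (lowerIdx (-(onShell m pk.2)) μ * lowerIdx (onShell m pk.1) ν
              + lowerIdx (onShell m pk.1) μ * lowerIdx (-(onShell m pk.2)) ν
              - etaMat μ ν * (eta4 (onShell m pk.1) (-(onShell m pk.2)) + m ^ 2)) := by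
      funext pk; rfl
    rw [heq]
    exact htg_mul (.const _)
      (htg_sub (htg_add (htg_mul (hB μ) (hA ν)) (htg_mul (hA μ) (hB ν)))
        (htg_mul (.const _) (htg_add hE4 (.const _))))
  -- the outer composition map
  set gOut : D → ℝ × (Fin 3 → ℝ) := fun pk => (Em m pk.1 + Em m pk.2, pk.1 + pk.2) with hgOutdef
  have hgOut : Function.HasTemperateGrowth gOut := by
    apply htg_prod_mk (htg_add hEm1 hEm2)
    have := (ContinuousLinearMap.fst ℝ (Fin 3 → ℝ) (Fin 3 → ℝ)
      + ContinuousLinearMap.snd ℝ (Fin 3 → ℝ) (Fin 3 → ℝ)).hasTemperateGrowth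
    exact this
  have hEmnn : ∀ q : Fin 3 → ℝ, 0 ≤ Em m q := fun q => Real.sqrt_nonneg _
  have hEmge : ∀ (q : Fin 3 → ℝ) (i : Fin 3), |q i| ≤ Em m q := by
    intro q i
    rw [← Real.sqrt_sq_eq_abs]
    apply Real.sqrt_le_sqrt
    have h3 : q i ^ 2 ≤ q 0 ^ 2 + q 1 ^ 2 + q 2 ^ 2 := by
      fin_cases i
      · show q 0 ^ 2 ≤ _
        nlinarith [sq_nonneg (q 1), sq_nonneg (q 2)]
      · show q 1 ^ 2 ≤ _
        nlinarith [sq_nonneg (q 0), sq_nonneg (q 2)]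
      · show q 2 ^ 2 ≤ _
        nlinarith [sq_nonneg (q 0), sq_nonneg (q 1)]
    nlinarith [sq_nonneg m]
  have hgOut_up : ∃ (kk : ℕ) (C : ℝ), ∀ pk : D, ‖pk‖ ≤ C * (1 + ‖gOut pk‖) ^ kk := by
    refine ⟨1, 1, fun pk => ?_⟩
    have hfirst : Em m pk.1 + Em m pk.2 ≤ ‖gOut pk‖ := by
      calc Em m pk.1 + Em m pk.2 ≤ |Em m pk.1 + Em m pk.2| := le_abs_self _
        _ = ‖(gOut pk).1‖ := by rw [hgOutdef]; rfl
        _ ≤ ‖gOut pk‖ := norm_fst_le _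
    have h1 : ‖pk.1‖ ≤ ‖gOut pk‖ := by
      have hnn : (0:ℝ) ≤ ‖gOut pk‖ := norm_nonneg _
      rw [pi_norm_le_iff_of_nonneg hnn]
      intro i
      calc ‖pk.1 i‖ = |pk.1 i| := rfl
        _ ≤ Em m pk.1 := hEmge _ i
        _ ≤ Em m pk.1 + Em m pk.2 := by linarith [hEmnn pk.2]
        _ ≤ ‖gOut pk‖ := hfirst
    have h2 : ‖pk.2‖ ≤ ‖gOut pk‖ := by
      have hnn : (0:ℝ) ≤ ‖gOut pk‖ := norm_nonneg _
      rw [pi_norm_le_iff_of_nonneg hnn]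
      intro i
      calc ‖pk.2 i‖ = |pk.2 i| := rfl
        _ ≤ Em m pk.2 := hEmge _ i
        _ ≤ Em m pk.1 + Em m pk.2 := by linarith [hEmnn pk.1]
        _ ≤ ‖gOut pk‖ := hfirst
    have : ‖pk‖ ≤ ‖gOut pk‖ := by
      rw [Prod.norm_def]
      exact max_le h1 h2
    have hnn : (0:ℝ) ≤ ‖gOut pk‖ := norm_nonneg _
    calc ‖pk‖ ≤ ‖gOut pk‖ := this
      _ ≤ 1 * (1 + ‖gOut pk‖) ^ 1 := by nlinarith
  -- assemble
  refine ⟨SchwartzMap.bilinLeftCLM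
    ((ContinuousLinearMap.lsmul ℝ ℝ : ℝ →L[ℝ] ℂ →L[ℝ] ℂ).flip) hT
    (SchwartzMap.compCLM ℝ hgOut hgOut_up (Fhat f)), fun p k => ?_⟩
  have h1 : (SchwartzMap.bilinLeftCLM
      ((ContinuousLinearMap.lsmul ℝ ℝ : ℝ →L[ℝ] ℂ →L[ℝ] ℂ).flip) hT
      (SchwartzMap.compCLM ℝ hgOut hgOut_up (Fhat f))) (p, k)
      = tTensor m μ ν (onShell m p) (-(onShell m k)) • (Fhat f (gOut (p, k))) := rfl
  rw [h1, Fhat_apply]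
  have h2 : gOut (p, k) = (Em m p + Em m k, p + k) := rfl
  rw [h2]
  rw [Complex.real_smul, mul_comm]

end
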